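/- arXiv:1606.03704 — 3 statements merged into one kernel-verified Lean document; each statement's English description precedes it below -/
import Mathlib

section
/- Let E be a real vector space with dim_ℝ E = 3, and let A, B : E →ₗ[ℝ] ℂ be real-linear maps (ℂ regarded as a 2-dimensional real vector space). Define the real-linear map G : E → ℂ³ by G(v) = (A v, B v, conj(A v)), where conj denotes complex conjugation. If A is surjective, then the range of G contains no complex line: (range G) ⊓ i·(range G) = {0}, where i·(range G) denotes the image of range G under the real-linear map w ↦ i•w on ℂ³. -/
/-!
If `G v = i • G w`, the first and third coordinates give `A v = i A w` and
`conj (A v) = i conj (A w)`, which together force `A v = A w = 0`. Hence `G v` and `G w` both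
lie in `G (ker A)`, a real subspace of dimension at most `dim ker A = 3 - 2 = 1`, and a real
line cannot contain `i` times one of its nonzero vectors.
-/

noncomputable def mulI (V : Type*) [AddCommGroup V] [Module ℂ V] : V →ₗ[ℝ] V where
  toFun v := Complex.I • v
  map_add' x y := smul_add Complex.I x y
  map_smul' r v := smul_comm Complex.I r v

open Complex ComplexConjugate Module

@[simp]
theorem mulI_apply (V : Type*) [AddCommGroup V] [Module ℂ V] (v : V) : mulI V v = I • v := rfl

theorem Complex.eq_zero_of_I_mul_eq_of_I_mul_conj_eq_conj {z w : ℂ} (h : I * w = z)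
    (hconj : I * conj w = conj z) : w = 0 := by
  have hneg : -I * w = z := by simpa using congrArg conj hconj
  have h2 : (2 * I) * w = 0 := by linear_combination h - hneg
  simpa [I_ne_zero] using h2

theorem Submodule.inf_map_mulI_eq_bot_of_rank_le_one {V : Type*} [AddCommGroup V] [Module ℂ V]
    (W : Submodule ℝ V) (hW : Module.rank ℝ W ≤ 1) : W ⊓ W.map (mulI V) = ⊥ := by
  obtain ⟨u, hu⟩ := rank_le_one_iff.mp hW
  rw [eq_bot_iff]
  rintro _ ⟨hx, y, hy, rfl⟩
  obtain ⟨a, ha⟩ := hu ⟨_, hx⟩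
  obtain ⟨b, hb⟩ := hu ⟨y, hy⟩
  have hxa : I • y = (a : ℂ) • (u : V) := by
    simpa [Complex.coe_smul] using (congrArg Subtype.val ha).symm
  have hyb : y = (b : ℂ) • (u : V) := by
    simpa [Complex.coe_smul] using (congrArg Subtype.val hb).symm
  have hcoef : ((a : ℂ) - I * b) • (u : V) = 0 := by
    rw [sub_smul, mul_smul, ← hyb, hxa, sub_self]
  rw [Submodule.mem_bot, mulI_apply, hxa]
  rcases smul_eq_zero.mp hcoef with hab | hu0
  · have ha0 : a = 0 := by simpa using congrArg re hab
    simp [ha0]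
  · simp [hu0]

theorem LinearMap.finrank_ker_eq_one_of_surjective {E : Type*} [AddCommGroup E] [Module ℝ E]
    (hdim : finrank ℝ E = 3) (A : E →ₗ[ℝ] ℂ) (hA : Function.Surjective A) :
    finrank ℝ (LinearMap.ker A) = 1 := by
  have : FiniteDimensional ℝ E := Module.finite_of_finrank_eq_succ hdim
  have hrn := A.finrank_range_add_finrank_ker
  rw [LinearMap.range_eq_top.mpr hA, finrank_top, finrank_real_complex, hdim] at hrn
  omega

/-- Let `E` be a real vector space of dimension `3` and `A, B : E →ₗ[ℝ] ℂ` real-linear maps.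
If `A` is surjective, then the range of `G = (A, B, conj ∘ A) : E → ℂ³` contains no complex
line: `range G ⊓ i·(range G) = ⊥`. -/
theorem range_inf_mulI_map_eq_bot_of_surjective {E : Type*} [AddCommGroup E] [Module ℝ E]
    (hdim : Module.finrank ℝ E = 3) (A B : E →ₗ[ℝ] ℂ)
    (hA : Function.Surjective A) :
    (LinearMap.range (A.prod (B.prod (Complex.conjLIE.toLinearMap ∘ₗ A)))) ⊓
      (LinearMap.range (A.prod (B.prod (Complex.conjLIE.toLinearMap ∘ₗ A)))).map
        (mulI (ℂ × ℂ × ℂ)) = ⊥ := by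
  set G := A.prod (B.prod (Complex.conjLIE.toLinearMap ∘ₗ A))
  have : FiniteDimensional ℝ E := Module.finite_of_finrank_eq_succ hdim
  have hW : Module.rank ℝ ((LinearMap.ker A).map G) ≤ 1 := by
    rw [← finrank_eq_rank, ← Nat.cast_one, Nat.cast_le,
      ← A.finrank_ker_eq_one_of_surjective hdim hA]
    exact Submodule.finrank_map_le G _
  rw [eq_bot_iff, ← Submodule.inf_map_mulI_eq_bot_of_rank_le_one _ hW]
  rintro _ ⟨⟨v, rfl⟩, _, ⟨w, rfl⟩, hvw⟩
  have hA1 : I * A w = A v := congrArg Prod.fst hvw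
  have hA3 : I * conj (A w) = conj (A v) := congrArg (·.2.2) hvw
  have hAw : A w = 0 := eq_zero_of_I_mul_eq_of_I_mul_conj_eq_conj hA1 hA3
  have hAv : A v = 0 := by rw [← hA1, hAw, mul_zero]
  exact ⟨⟨v, hAv, rfl⟩, G w, ⟨w, hAw, rfl⟩, hvw⟩
end

section
/- Let E be a real vector space with dim_ℝ E = 3, and let A, B : E →ₗ[ℝ] ℂ be real-linear maps (ℂ regarded as a 2-dimensional real vector space) such that A is NOT surjective and ker A ⊓ ker B = {0}. Define the real-linear map G : E → ℂ³ by G(v) = (A v, B v, conj(A v)), where conj denotes complex conjugation. Then the image of ker A under G equals the complex line {(0, w, 0) : w ∈ ℂ} in ℂ³; in particular, (range G) ⊓ i·(range G) ≠ {0}, i.e. range G contains a complex line. -/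
/-!
Since `A` is not surjective, its rank is at most `1`, so `ker A` has real dimension at least `2`.
As `ker A ∩ ker B = 0`, the map `B` is injective on `ker A`, hence maps it onto `ℂ`. On `ker A`
the map `G = (A, B, conj ∘ A)` is `v ↦ (0, B v, 0)`, so `G (ker A) = {0} × ℂ × {0}`, a complex
line inside `range G`.
-/

namespace Submodule

section Prod

variable {R M N P : Type*} [Ring R] [AddCommGroup M] [AddCommGroup N] [AddCommGroup P]
  [Module R M] [Module R N] [Module R P]

theorem map_prod_of_le_ker_left {p : Submodule R M} {f : M →ₗ[R] N} (hp : p ≤ LinearMap.ker f)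
    (g : M →ₗ[R] P) : p.map (f.prod g) = (⊥ : Submodule R N).prod (p.map g) := by
  ext ⟨y, z⟩
  simp only [mem_map, mem_prod, mem_bot, LinearMap.prod_apply, Function.prod_apply]
  constructor
  · rintro ⟨x, hx, rfl, rfl⟩
    exact ⟨hp hx, x, hx, rfl⟩
  · rintro ⟨rfl, x, hx, rfl⟩
    exact ⟨x, hx, Prod.ext (hp hx) rfl⟩

theorem map_prod_of_le_ker_right {p : Submodule R M} (f : M →ₗ[R] N) {g : M →ₗ[R] P}
    (hp : p ≤ LinearMap.ker g) : p.map (f.prod g) = (p.map f).prod (⊥ : Submodule R P) := by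
  ext ⟨y, z⟩
  simp only [mem_map, mem_prod, mem_bot, LinearMap.prod_apply, Function.prod_apply]
  constructor
  · rintro ⟨x, hx, rfl, rfl⟩
    exact ⟨⟨x, hx, rfl⟩, hp hx⟩
  · rintro ⟨⟨x, hx, rfl⟩, rfl⟩
    exact ⟨x, hx, Prod.ext rfl (hp hx)⟩

end Prod

theorem inf_map_mulI_ne_bot {V : Type*} [AddCommGroup V] [Module ℂ V] {L W : Submodule ℝ V}
    (hL : L ≠ ⊥) (hLi : L ≤ L.map (mulI V)) (hLW : L ≤ W) : W ⊓ W.map (mulI V) ≠ ⊥ :=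
  ne_bot_of_le_ne_bot hL (le_inf hLW (hLi.trans (map_mono hLW)))

end Submodule

namespace LinearMap

variable {K E V W : Type*} [DivisionRing K] [AddCommGroup E] [AddCommGroup V] [AddCommGroup W]
  [Module K E] [Module K V] [Module K W]

theorem finrank_lt_finrank_add_finrank_ker [FiniteDimensional K E] [FiniteDimensional K V]
    {A : E →ₗ[K] V} (hA : ¬ Function.Surjective A) :
    Module.finrank K E < Module.finrank K V + Module.finrank K (ker A) := by
  have hrange := Submodule.finrank_lt fun h => hA (range_eq_top.mp h)
  rw [← A.finrank_range_add_finrank_ker]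
  omega

theorem map_ker_eq_top_of_finrank_le [FiniteDimensional K W] {A : E →ₗ[K] V} {B : E →ₗ[K] W}
    (hAB : Disjoint (ker A) (ker B)) (hW : Module.finrank K W ≤ Module.finrank K (ker A)) :
    (ker A).map B = ⊤ := by
  refine Submodule.eq_top_of_finrank_eq ((Submodule.finrank_le _).antisymm ?_)
  rwa [← range_domRestrict, finrank_range_of_inj (injective_domRestrict_iff.mpr hAB)]

end LinearMap

theorem bot_prod_top_prod_bot_le_map_mulI :
    (⊥ : Submodule ℝ ℂ).prod ((⊤ : Submodule ℝ ℂ).prod (⊥ : Submodule ℝ ℂ)) ≤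
      ((⊥ : Submodule ℝ ℂ).prod ((⊤ : Submodule ℝ ℂ).prod (⊥ : Submodule ℝ ℂ))).map
        (mulI (ℂ × ℂ × ℂ)) := by
  rintro ⟨a, b, c⟩ ⟨ha, -, hc⟩
  rw [SetLike.mem_coe, Submodule.mem_bot] at ha hc
  subst ha hc
  refine ⟨(0, -Complex.I * b, 0), ⟨rfl, trivial, rfl⟩, ?_⟩
  simp [mulI, ← mul_assoc]

theorem bot_prod_top_prod_bot_ne_bot :
    (⊥ : Submodule ℝ ℂ).prod ((⊤ : Submodule ℝ ℂ).prod (⊥ : Submodule ℝ ℂ)) ≠ ⊥ :=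
  Submodule.ne_bot_iff _ |>.mpr ⟨(0, 1, 0), ⟨rfl, trivial, rfl⟩, by simp⟩

/-- Let `E` be a real vector space of dimension `3` and `A, B : E →ₗ[ℝ] ℂ` real-linear maps
such that `A` is not surjective and `ker A ⊓ ker B = ⊥`. Then the image of `ker A` under
`G = (A, B, conj ∘ A) : E → ℂ³` is the complex line `{0} × ℂ × {0}`; in particular,
`range G ⊓ i·(range G) ≠ ⊥`, i.e. the range of `G` contains a complex line. -/
theorem map_ker_eq_line_of_not_surjective {E : Type*} [AddCommGroup E] [Module ℝ E]
    (hdim : Module.finrank ℝ E = 3) (A B : E →ₗ[ℝ] ℂ)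
    (hA : ¬ Function.Surjective A)
    (hker : LinearMap.ker A ⊓ LinearMap.ker B = ⊥) :
    (LinearMap.ker A).map (A.prod (B.prod (Complex.conjLIE.toLinearMap ∘ₗ A))) =
      (⊥ : Submodule ℝ ℂ).prod ((⊤ : Submodule ℝ ℂ).prod (⊥ : Submodule ℝ ℂ)) ∧
    (LinearMap.range (A.prod (B.prod (Complex.conjLIE.toLinearMap ∘ₗ A)))) ⊓
      (LinearMap.range (A.prod (B.prod (Complex.conjLIE.toLinearMap ∘ₗ A)))).map
        (mulI (ℂ × ℂ × ℂ)) ≠ ⊥ := by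
  have : FiniteDimensional ℝ E := Module.finite_of_finrank_pos (by omega)
  have hrank := LinearMap.finrank_lt_finrank_add_finrank_ker hA
  rw [hdim, Complex.finrank_real_complex] at hrank
  have hB : (LinearMap.ker A).map B = ⊤ :=
    LinearMap.map_ker_eq_top_of_finrank_le (disjoint_iff.mpr hker)
      (by rw [Complex.finrank_real_complex]; omega)
  have hline : (LinearMap.ker A).map (A.prod (B.prod (Complex.conjLIE.toLinearMap ∘ₗ A))) =
      (⊥ : Submodule ℝ ℂ).prod ((⊤ : Submodule ℝ ℂ).prod (⊥ : Submodule ℝ ℂ)) := by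
    rw [Submodule.map_prod_of_le_ker_left le_rfl,
      Submodule.map_prod_of_le_ker_right _ (LinearMap.ker_le_ker_comp A _), hB]
  refine ⟨hline, Submodule.inf_map_mulI_ne_bot bot_prod_top_prod_bot_ne_bot bot_prod_top_prod_bot_le_map_mulI ?_⟩
  exact hline ▸ LinearMap.map_le_range
end

section
/- Let M be a C^∞ manifold without boundary modelled on EuclideanSpace ℝ (Fin 3) (a smooth 3-manifold), and let g₁, g₂ : M → ℂ be C^∞ maps (ℂ regarded as a smooth real 2-manifold) such that the map p ↦ (g₁ p, g₂ p) : M → ℂ² is an immersion, i.e. its differential mfderiv at every point is injective. Define G : M → ℂ³ by G(p) = (g₁(p), g₂(p), conj(g₁(p))), where conj denotes complex conjugation. Then: (a) G is a C^∞ immersion of M into ℂ³; and (b) for every p ∈ M, the point p is a complex tangent of G if and only if the differential mfderiv g₁ p : T_pM → ℂ is not surjective (i.e. p lies in the singular set S(g₁) of g₁). -/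
/-!
Write `F = (g₁, g₂)` and `σ (a, b) = (a, b, ā)`, so that `G = σ ∘ F` and `dG = σ ∘ dF` with `σ`
injective. Since `conj (i a) = -i ā`, a vector `i • σ z` lies in the image of `σ` only if
`z.1 = 0`; hence `range dG` contains a complex line iff `range dF ⊇ {0} × ℂ = ker pr₁`. As
`range dF` is a real hyperplane of `ℂ²`, this happens iff `range dF + ker pr₁ ≠ ℂ²`, i.e. iff
`dg₁ = pr₁ ∘ dF` is not onto.
-/

open scoped Manifold

/-- A real subspace `W` of a complex vector space contains a complex line iff `W ⊓ i·W ≠ ⊥`. -/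
def HasComplexLine {V : Type*} [AddCommGroup V] [Module ℂ V] (W : Submodule ℝ V) : Prop :=
  W ⊓ W.map (mulI V) ≠ ⊥

/-- The range of the manifold differential at `x` of a map `F : M³ → ℂ³`,
as a real subspace of `ℂ³`. -/
noncomputable def mfderivRange {M : Type*} [TopologicalSpace M]
    [ChartedSpace (EuclideanSpace ℝ (Fin 3)) M] (F : M → ℂ × ℂ × ℂ) (x : M) :
    Submodule ℝ (ℂ × ℂ × ℂ) :=
  LinearMap.range (((show TangentSpace (𝓡 3) x →L[ℝ] ℂ × ℂ × ℂ from
    mfderiv (𝓡 3) 𝓘(ℝ, ℂ × ℂ × ℂ) F x) : TangentSpace (𝓡 3) x →ₗ[ℝ] ℂ × ℂ × ℂ))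

open scoped ComplexConjugate
open Module

theorem hasComplexLine_iff {V : Type*} [AddCommGroup V] [Module ℂ V] {W : Submodule ℝ V} :
    HasComplexLine W ↔ ∃ w ∈ W, w ≠ 0 ∧ Complex.I • w ∈ W := by
  simp only [HasComplexLine, Submodule.ne_bot_iff, Submodule.mem_inf, Submodule.mem_map]
  constructor
  · rintro ⟨_, ⟨hIw, w, hw, rfl⟩, hw0⟩
    exact ⟨w, hw, fun h => hw0 (by simp [mulI, h]), hIw⟩
  · rintro ⟨w, hw, hw0, hIw⟩
    exact ⟨Complex.I • w, ⟨hIw, w, hw, rfl⟩, by simp [hw0]⟩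

theorem Complex.submodule_eq_top_of_mem_of_I_mul_mem {S : Submodule ℝ ℂ} {b : ℂ} (hb : b ≠ 0)
    (h : b ∈ S) (hI : I * b ∈ S) : S = ⊤ := by
  refine Submodule.eq_top_iff'.2 fun c => ?_
  have hc : c = (c / b).re • b + (c / b).im • (I * b) := by
    conv_lhs => rw [← div_mul_cancel₀ c hb, ← Complex.re_add_im (c / b)]
    simp only [Complex.real_smul]
    ring
  rw [hc]
  exact S.add_mem (S.smul_mem _ h) (S.smul_mem _ hI)

theorem Submodule.sup_eq_top_iff_not_le_of_finrank_add_one {K E : Type*} [DivisionRing K]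
    [AddCommGroup E] [Module K E] [FiniteDimensional K E] {U W : Submodule K E}
    (hU : finrank K U + 1 = finrank K E) : U ⊔ W = ⊤ ↔ ¬ W ≤ U := by
  constructor
  · intro h hWU
    rw [sup_eq_left.2 hWU] at h
    rw [h, finrank_top] at hU
    omega
  · intro hWU
    have hlt := Submodule.finrank_lt_finrank_of_lt (left_lt_sup.2 hWU)
    exact Submodule.eq_top_of_finrank_eq (le_antisymm (Submodule.finrank_le _) (by omega))

noncomputable def conjGraph : ℂ × ℂ →L[ℝ] ℂ × ℂ × ℂ :=
  (ContinuousLinearMap.fst ℝ ℂ ℂ).prod ((ContinuousLinearMap.snd ℝ ℂ ℂ).prod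
    (Complex.conjCLE.toContinuousLinearMap.comp (ContinuousLinearMap.fst ℝ ℂ ℂ)))

@[simp]
theorem conjGraph_apply (z : ℂ × ℂ) : conjGraph z = (z.1, z.2, conj z.1) := rfl

theorem conjGraph_injective : Function.Injective conjGraph := fun z z' h => by
  simp only [conjGraph_apply, Prod.mk.injEq] at h
  exact Prod.ext h.1 h.2.1

theorem hasComplexLine_map_conjGraph_iff (U : Submodule ℝ (ℂ × ℂ)) :
    HasComplexLine (U.map (conjGraph : ℂ × ℂ →ₗ[ℝ] ℂ × ℂ × ℂ)) ↔
      LinearMap.ker (LinearMap.fst ℝ ℂ ℂ) ≤ U := by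
  rw [hasComplexLine_iff, LinearMap.ker_fst]
  constructor
  · rintro ⟨_, ⟨z, hz, rfl⟩, hz0, z', hz', hIz⟩
    simp only [ContinuousLinearMap.coe_coe, conjGraph_apply, Prod.smul_mk, smul_eq_mul,
      Prod.mk.injEq] at hIz
    obtain ⟨h₁, h₂, h₃⟩ := hIz
    have hz₁ : z.1 = 0 := by
      rw [h₁, map_mul, Complex.conj_I] at h₃
      have : (2 * Complex.I) * conj z.1 = 0 := by linear_combination -h₃
      simpa [Complex.I_ne_zero] using this
    have hz₂ : z.2 ≠ 0 := fun h => hz0 (by simp [hz₁, h])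
    have hS : U.comap (LinearMap.inr ℝ ℂ ℂ) = ⊤ := by
      refine Complex.submodule_eq_top_of_mem_of_I_mul_mem hz₂ ?_ ?_
      · simpa [← hz₁] using hz
      · have : z' = (0, z'.2) := Prod.ext (by simp [h₁, hz₁]) rfl
        simpa [← h₂, ← this] using hz'
    rw [LinearMap.range_eq_map, Submodule.map_le_iff_le_comap, hS]
  · intro h
    refine ⟨_, ⟨(0, 1), h ⟨1, rfl⟩, rfl⟩, by simp, (0, Complex.I), h ⟨Complex.I, rfl⟩, ?_⟩
    simp

theorem hasComplexLine_range_conjGraph_comp_iff {V : Type*} [AddCommGroup V] [Module ℝ V]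
    (D : V →ₗ[ℝ] ℂ × ℂ) (hD : Function.Injective D) (hV : finrank ℝ V = 3) :
    HasComplexLine (LinearMap.range ((conjGraph : ℂ × ℂ →ₗ[ℝ] ℂ × ℂ × ℂ) ∘ₗ D)) ↔
      ¬ Function.Surjective (LinearMap.fst ℝ ℂ ℂ ∘ₗ D) := by
  have hcodim : finrank ℝ (LinearMap.range D) + 1 = finrank ℝ (ℂ × ℂ) := by
    rw [LinearMap.finrank_range_of_inj hD, hV, Module.finrank_prod, Complex.finrank_real_complex]
  rw [LinearMap.range_comp, hasComplexLine_map_conjGraph_iff, ← LinearMap.range_eq_top,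
    LinearMap.range_comp, LinearMap.map_eq_top_iff (LinearMap.range_eq_top.2 Prod.fst_surjective),
    Submodule.sup_eq_top_iff_not_le_of_finrank_add_one hcodim, not_not]

theorem ContinuousLinearMap.mfderiv_comp_left {𝕜 E H M F F' : Type*} [NontriviallyNormedField 𝕜]
    [NormedAddCommGroup E] [NormedSpace 𝕜 E] [TopologicalSpace H] {I : ModelWithCorners 𝕜 E H}
    [TopologicalSpace M] [ChartedSpace H M] [NormedAddCommGroup F] [NormedSpace 𝕜 F]
    [NormedAddCommGroup F'] [NormedSpace 𝕜 F'] (L : F →L[𝕜] F') {f : M → F} {x : M}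
    (hf : MDifferentiableAt I 𝓘(𝕜, F) f x) :
    mfderiv I 𝓘(𝕜, F') (L ∘ f) x = L.comp (mfderiv I 𝓘(𝕜, F) f x) := by
  rw [mfderiv_comp x L.mdifferentiableAt hf, L.mfderiv_eq]
  rfl

theorem immersion_complexTangent_iff_singular_general
    {M : Type*} [TopologicalSpace M] [ChartedSpace (EuclideanSpace ℝ (Fin 3)) M]
    (g₁ g₂ : M → ℂ)
    (hg₁ : ContMDiff (𝓡 3) 𝓘(ℝ, ℂ) (⊤ : ℕ∞) g₁) (hg₂ : ContMDiff (𝓡 3) 𝓘(ℝ, ℂ) (⊤ : ℕ∞) g₂)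
    (himm : ∀ p : M,
      Function.Injective (mfderiv (𝓡 3) 𝓘(ℝ, ℂ × ℂ) (fun q => (g₁ q, g₂ q)) p)) :
    (ContMDiff (𝓡 3) 𝓘(ℝ, ℂ × ℂ × ℂ)
        (⊤ : ℕ∞) (fun q => (g₁ q, g₂ q, starRingEnd ℂ (g₁ q))) ∧
      ∀ p : M, Function.Injective
        (mfderiv (𝓡 3) 𝓘(ℝ, ℂ × ℂ × ℂ) (fun q => (g₁ q, g₂ q, starRingEnd ℂ (g₁ q))) p)) ∧
    ∀ p : M,
      HasComplexLine (mfderivRange (fun q => (g₁ q, g₂ q, starRingEnd ℂ (g₁ q))) p) ↔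
        ¬ Function.Surjective (mfderiv (𝓡 3) 𝓘(ℝ, ℂ) g₁ p) := by
  set F : M → ℂ × ℂ := fun q => (g₁ q, g₂ q)
  have hF : ContMDiff (𝓡 3) 𝓘(ℝ, ℂ × ℂ) (⊤ : ℕ∞) F := hg₁.prodMk_space hg₂
  have hDF (p : M) : MDifferentiableAt (𝓡 3) 𝓘(ℝ, ℂ × ℂ) F p := hF.mdifferentiableAt (by simp)
  have hG : (fun q => (g₁ q, g₂ q, starRingEnd ℂ (g₁ q))) = conjGraph ∘ F := rfl
  have hDG (p : M) : mfderiv (𝓡 3) 𝓘(ℝ, ℂ × ℂ × ℂ) (conjGraph ∘ F) p =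
      conjGraph.comp (mfderiv (𝓡 3) 𝓘(ℝ, ℂ × ℂ) F p) :=
    conjGraph.mfderiv_comp_left (hDF p)
  have hDg₁ (p : M) : mfderiv (𝓡 3) 𝓘(ℝ, ℂ) g₁ p =
      (ContinuousLinearMap.fst ℝ ℂ ℂ).comp (mfderiv (𝓡 3) 𝓘(ℝ, ℂ × ℂ) F p) :=
    (ContinuousLinearMap.fst ℝ ℂ ℂ).mfderiv_comp_left (hDF p)
  rw [hG]
  refine ⟨⟨conjGraph.contMDiff.comp hF, fun p => ?_⟩, fun p => ?_⟩
  · rw [hDG]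
    exact conjGraph_injective.comp (himm p)
  · rw [mfderivRange, hDG, hDg₁]
    exact hasComplexLine_range_conjGraph_comp_iff _ (himm p) finrank_euclideanSpace_fin

/-- If `g₁, g₂ : M³ → ℂ` are `C^∞` maps from a smooth 3-manifold such that `(g₁, g₂) : M → ℂ²`
is an immersion, then `G = (g₁, g₂, conj ∘ g₁) : M → ℂ³` is a `C^∞` immersion whose set of
complex tangents is exactly the singular set `S(g₁)` of `g₁`. -/
theorem immersion_complexTangent_iff_singular
    {M : Type*} [TopologicalSpace M] [ChartedSpace (EuclideanSpace ℝ (Fin 3)) M]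
    [IsManifold (𝓡 3) ((⊤ : ℕ∞) : WithTop ℕ∞) M]
    (g₁ g₂ : M → ℂ)
    (hg₁ : ContMDiff (𝓡 3) 𝓘(ℝ, ℂ) (⊤ : ℕ∞) g₁) (hg₂ : ContMDiff (𝓡 3) 𝓘(ℝ, ℂ) (⊤ : ℕ∞) g₂)
    (himm : ∀ p : M,
      Function.Injective (mfderiv (𝓡 3) 𝓘(ℝ, ℂ × ℂ) (fun q => (g₁ q, g₂ q)) p)) :
    (ContMDiff (𝓡 3) 𝓘(ℝ, ℂ × ℂ × ℂ)
        (⊤ : ℕ∞) (fun q => (g₁ q, g₂ q, starRingEnd ℂ (g₁ q))) ∧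
      ∀ p : M, Function.Injective
        (mfderiv (𝓡 3) 𝓘(ℝ, ℂ × ℂ × ℂ) (fun q => (g₁ q, g₂ q, starRingEnd ℂ (g₁ q))) p)) ∧
    ∀ p : M,
      HasComplexLine (mfderivRange (fun q => (g₁ q, g₂ q, starRingEnd ℂ (g₁ q))) p) ↔
        ¬ Function.Surjective (mfderiv (𝓡 3) 𝓘(ℝ, ℂ) g₁ p) :=
  immersion_complexTangent_iff_singular_general g₁ g₂ hg₁ hg₂ himm
end
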